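/- arXiv:math/0508165 — 2 statements merged into one kernel-verified Lean document; each statement's English description precedes it below -/
import Mathlib

section
/- Let X and Y be compact metric spaces equipped with finite Borel measures μ and ν respectively, and let E ⊆ X×Y be a set whose complement is a countable union of Borel rectangles A_n×B_n (A_n ⊆ X, B_n ⊆ Y Borel). Then E can be written as the union of countably many compact subsets of X×Y together with a marginally null set. -/
open MeasureTheory

/-- A subset `M ⊆ X × Y` is marginally null (w.r.t. measures `μ`, `ν`) if
`M ⊆ (X₁ × Y) ∪ (X × Y₁)` for some measurable `X₁`, `Y₁` with `μ X₁ = ν Y₁ = 0`. -/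
def MarginallyNull {X Y : Type*} [MeasurableSpace X] [MeasurableSpace Y]
    (μ : Measure X) (ν : Measure Y) (M : Set (X × Y)) : Prop :=
  ∃ (X₁ : Set X) (Y₁ : Set Y), MeasurableSet X₁ ∧ MeasurableSet Y₁ ∧
    μ X₁ = 0 ∧ ν Y₁ = 0 ∧ M ⊆ (X₁ ×ˢ (Set.univ : Set Y)) ∪ ((Set.univ : Set X) ×ˢ Y₁)

/-- Auxiliary: geometric series computation in `ℝ≥0∞`. -/
lemma tsum_geom_aux (k : ℕ) :
    (∑' n : ℕ, (2 : ENNReal)⁻¹ ^ (k + n + 1)) = (2 : ENNReal)⁻¹ ^ k := by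
  have h : ∀ n : ℕ, (2 : ENNReal)⁻¹ ^ (k + n + 1)
      = (2 : ENNReal)⁻¹ ^ (k + 1) * (2 : ENNReal)⁻¹ ^ n := by
    intro n; rw [← pow_add]; ring_nf
  simp_rw [h]
  rw [ENNReal.tsum_mul_left, ENNReal.tsum_geometric, ENNReal.one_sub_inv_two, inv_inv,
    pow_succ, mul_assoc, ENNReal.inv_mul_cancel two_ne_zero ENNReal.ofNat_ne_top, mul_one]

/-- Auxiliary: inner approximation of a family of measurable sets by compacts,
with summable errors. -/
lemma exists_compact_approx {X : Type*} [MetricSpace X] [CompactSpace X]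
    [MeasurableSpace X] [BorelSpace X] (μ : Measure X) [IsFiniteMeasure μ]
    (A : ℕ → Set X) (hA : ∀ n, MeasurableSet (A n)) :
    ∃ C : ℕ → ℕ → Set X, ∀ k n, C k n ⊆ (A n)ᶜ ∧ IsCompact (C k n) ∧
      μ ((A n)ᶜ \ C k n) < (2 : ENNReal)⁻¹ ^ (k + n + 1) := by
  have : ∀ k n : ℕ, ∃ K, K ⊆ (A n)ᶜ ∧ IsCompact K ∧
      μ ((A n)ᶜ \ K) < (2 : ENNReal)⁻¹ ^ (k + n + 1) := by
    intro k n
    exact (hA n).compl.exists_isCompact_diff_lt (measure_ne_top μ _)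
      (pow_ne_zero _ (ENNReal.inv_ne_zero.mpr ENNReal.ofNat_ne_top))
  choose C hC using this
  exact ⟨C, hC⟩

/-- Auxiliary: Borel–Cantelli bound for errors of size `2⁻¹ ^ k`. -/
lemma measure_limsup_aux {X : Type*} [MeasurableSpace X] (μ : Measure X)
    (S : ℕ → Set X) (hS : ∀ k, μ (S k) ≤ (2 : ENNReal)⁻¹ ^ k) :
    μ (Filter.limsup S Filter.atTop) = 0 := by
  apply measure_limsup_atTop_eq_zero
  have h1 : (∑' k : ℕ, μ (S k)) ≤ ∑' k : ℕ, (2 : ENNReal)⁻¹ ^ k :=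
    ENNReal.tsum_le_tsum hS
  refine ne_top_of_le_ne_top ?_ h1
  rw [ENNReal.tsum_geometric, ENNReal.one_sub_inv_two, inv_inv]
  exact ENNReal.ofNat_ne_top

/-- Let `X`, `Y` be compact metric spaces with finite Borel measures `μ`, `ν`,
and let `E ⊆ X × Y` be a set whose complement is a countable union of Borel rectangles.
Then `E` is the union of countably many compact sets together with a marginally null set. -/
theorem eq_iUnion_compact_union_marginallyNull
    {X Y : Type*} [MetricSpace X] [CompactSpace X] [MeasurableSpace X] [BorelSpace X]
    [MetricSpace Y] [CompactSpace Y] [MeasurableSpace Y] [BorelSpace Y]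
    (μ : Measure X) (ν : Measure Y) [IsFiniteMeasure μ] [IsFiniteMeasure ν]
    (E : Set (X × Y)) (A : ℕ → Set X) (B : ℕ → Set Y)
    (hA : ∀ n, MeasurableSet (A n)) (hB : ∀ n, MeasurableSet (B n))
    (hE : Eᶜ = ⋃ n, A n ×ˢ B n) :
    ∃ (K : ℕ → Set (X × Y)) (M : Set (X × Y)),
      (∀ n, IsCompact (K n)) ∧ MarginallyNull μ ν M ∧ E = (⋃ n, K n) ∪ M := by
  obtain ⟨C, hC⟩ := exists_compact_approx μ A hA
  obtain ⟨D, hD⟩ := exists_compact_approx ν B hB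
  -- the compact pieces
  set K : ℕ → Set (X × Y) :=
    fun k => ⋂ n, (C k n ×ˢ (Set.univ : Set Y)) ∪ ((Set.univ : Set X) ×ˢ D k n) with hK
  have hKcompact : ∀ k, IsCompact (K k) := by
    intro k
    apply IsClosed.isCompact
    apply isClosed_iInter
    intro n
    exact (((hC k n).2.1.isClosed.prod isClosed_univ).union
      (isClosed_univ.prod (hD k n).2.1.isClosed))
  -- each K k is contained in E
  have hKE : ∀ k, K k ⊆ E := by
    intro k p hp
    by_contra hpE
    have : p ∈ ⋃ n, A n ×ˢ B n := by rw [← hE]; exact hpE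
    obtain ⟨n, hn1, hn2⟩ := Set.mem_iUnion.mp this
    have := Set.mem_iInter.mp hp n
    rcases this with h | h
    · exact (hC k n).1 h.1 hn1
    · exact (hD k n).1 h.2 hn2
  -- error sets
  set S : ℕ → Set X := fun k => ⋃ n, ((A n)ᶜ \ C k n) with hSdef
  set T : ℕ → Set Y := fun k => ⋃ n, ((B n)ᶜ \ D k n) with hTdef
  have hSmeas : ∀ k, MeasurableSet (S k) := fun k =>
    MeasurableSet.iUnion fun n => (hA n).compl.diff (hC k n).2.1.isClosed.measurableSet
  have hTmeas : ∀ k, MeasurableSet (T k) := fun k =>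
    MeasurableSet.iUnion fun n => (hB n).compl.diff (hD k n).2.1.isClosed.measurableSet
  have hSbound : ∀ k, μ (S k) ≤ (2 : ENNReal)⁻¹ ^ k := by
    intro k
    calc μ (S k) ≤ ∑' n, μ ((A n)ᶜ \ C k n) := measure_iUnion_le _
      _ ≤ ∑' n : ℕ, (2 : ENNReal)⁻¹ ^ (k + n + 1) :=
          ENNReal.tsum_le_tsum fun n => (hC k n).2.2.le
      _ = (2 : ENNReal)⁻¹ ^ k := tsum_geom_aux k
  have hTbound : ∀ k, ν (T k) ≤ (2 : ENNReal)⁻¹ ^ k := by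
    intro k
    calc ν (T k) ≤ ∑' n, ν ((B n)ᶜ \ D k n) := measure_iUnion_le _
      _ ≤ ∑' n : ℕ, (2 : ENNReal)⁻¹ ^ (k + n + 1) :=
          ENNReal.tsum_le_tsum fun n => (hD k n).2.2.le
      _ = (2 : ENNReal)⁻¹ ^ k := tsum_geom_aux k
  -- the null marginal sets
  set X₁ : Set X := Filter.limsup S Filter.atTop with hX₁
  set Y₁ : Set Y := Filter.limsup T Filter.atTop with hY₁
  have hX₁meas : MeasurableSet X₁ := by
    rw [hX₁, Filter.limsup_eq_iInf_iSup_of_nat]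
    exact MeasurableSet.iInter fun k => MeasurableSet.iUnion fun j =>
      MeasurableSet.iUnion fun _ => hSmeas j
  have hY₁meas : MeasurableSet Y₁ := by
    rw [hY₁, Filter.limsup_eq_iInf_iSup_of_nat]
    exact MeasurableSet.iInter fun k => MeasurableSet.iUnion fun j =>
      MeasurableSet.iUnion fun _ => hTmeas j
  have hX₁null : μ X₁ = 0 := measure_limsup_aux μ S hSbound
  have hY₁null : ν Y₁ = 0 := measure_limsup_aux ν T hTbound
  refine ⟨K, E \ ⋃ k, K k, hKcompact, ⟨X₁, Y₁, hX₁meas, hY₁meas, hX₁null, hY₁null, ?_⟩, ?_⟩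
  · -- E \ ⋃ K ⊆ X₁ × Y ∪ X × Y₁
    rintro ⟨x, y⟩ ⟨hxyE, hxyK⟩
    -- for each k, x ∈ S k or y ∈ T k
    have key : ∀ k, x ∈ S k ∨ y ∈ T k := by
      intro k
      have h1 : (x, y) ∉ K k := fun h => hxyK (Set.mem_iUnion.mpr ⟨k, h⟩)
      rw [hK] at h1
      simp only [Set.mem_iInter, not_forall] at h1
      obtain ⟨n, hn⟩ := h1
      simp only [Set.mem_union, Set.mem_prod, Set.mem_univ, and_true, true_and,
        not_or] at hn
      -- (x,y) ∈ E so ¬(x ∈ A n ∧ y ∈ B n)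
      have hAB : x ∉ A n ∨ y ∉ B n := by
        by_contra h
        push_neg at h
        have : (x, y) ∈ Eᶜ := by rw [hE]; exact Set.mem_iUnion.mpr ⟨n, h.1, h.2⟩
        exact this hxyE
      rcases hAB with h | h
      · exact Or.inl (Set.mem_iUnion.mpr ⟨n, h, hn.1⟩)
      · exact Or.inr (Set.mem_iUnion.mpr ⟨n, h, hn.2⟩)
    -- hence x ∈ limsup S or y ∈ limsup T
    by_cases hx : ∃ᶠ k in Filter.atTop, x ∈ S k
    · exact Or.inl ⟨Filter.mem_limsup_iff_frequently_mem.mpr hx, Set.mem_univ _⟩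
    · right
      refine ⟨Set.mem_univ _, Filter.mem_limsup_iff_frequently_mem.mpr ?_⟩
      rw [Filter.not_frequently] at hx
      rw [Filter.frequently_atTop]
      intro a
      rw [Filter.eventually_atTop] at hx
      obtain ⟨b, hb⟩ := hx
      refine ⟨max a b, le_max_left _ _, ?_⟩
      rcases key (max a b) with h | h
      · exact absurd h (hb _ (le_max_right a b))
      · exact h
  · -- E = (⋃ K) ∪ (E \ ⋃ K)
    rw [Set.union_diff_self, Set.union_eq_self_of_subset_left (Set.iUnion_subset hKE)]
end

section
/- Let B be a commutative unital complex Banach algebra that is semisimple (its Gelfand transform is injective) and regular (for every closed set E in the character space X_B of B and every character φ₀ ∉ E there exists a ∈ B with φ₀(a) = 1 and φ(a) = 0 for all φ ∈ E). Let M be a complex Banach space that is a Banach B-module (there is K > 0 with ‖b·x‖ ≤ K‖b‖‖x‖ for all b ∈ B, x ∈ M). For x ∈ M let ann(x) = {b ∈ B : b·x = 0} and Supp(x) = {φ ∈ X_B : φ(b) = 0 for all b ∈ ann(x)}. If E ⊆ X_B is closed, f ∈ J_B(E), and x ∈ M satisfies Supp(x) ⊆ E, then f·x = 0. -/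
open WeakDual

/-- Let `B` be a commutative unital complex Banach algebra which is
semisimple (the Gelfand transform is injective, i.e. characters separate points) and
regular. Let `M` be a Banach `B`-module. If `E` is a closed subset of the character space,
`f ∈ J_B(E)` (i.e. `f` lies in the closure of the set of elements whose Gelfand transform
vanishes on a neighborhood of `E`), and `x ∈ M` satisfies `Supp(x) ⊆ E`, then `f • x = 0`. -/
theorem smul_eq_zero_of_mem_J_of_supp_subset
    {B : Type*} [NormedCommRing B] [NormedAlgebra ℂ B] [CompleteSpace B] [Nontrivial B]
    (hsemi : ∀ b : B, (∀ φ : characterSpace ℂ B, φ b = 0) → b = 0)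
    (hreg : ∀ E : Set (characterSpace ℂ B), IsClosed E → ∀ φ₀ : characterSpace ℂ B,
      φ₀ ∉ E → ∃ a : B, φ₀ a = 1 ∧ ∀ φ ∈ E, φ a = 0)
    {M : Type*} [NormedAddCommGroup M] [NormedSpace ℂ M] [CompleteSpace M] [Module B M]
    (K : ℝ) (hK : 0 < K) (hmod : ∀ (b : B) (x : M), ‖b • x‖ ≤ K * ‖b‖ * ‖x‖)
    (E : Set (characterSpace ℂ B)) (hE : IsClosed E)
    (f : B)
    (hf : f ∈ closure {a : B | ∃ U : Set (characterSpace ℂ B),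
      IsOpen U ∧ E ⊆ U ∧ ∀ φ ∈ U, φ a = 0})
    (x : M)
    (hsupp : {φ : characterSpace ℂ B | ∀ b : B, b • x = 0 → φ b = 0} ⊆ E) :
    f • x = 0 := by
  -- the map `b ↦ b • x` is Lipschitz, hence continuous
  have hcont : Continuous (fun b : B => b • x) := by
    have h : LipschitzWith (Real.toNNReal (K * ‖x‖)) (fun b : B => b • x) := by
      apply LipschitzWith.of_dist_le_mul
      intro b₁ b₂
      rw [dist_eq_norm, dist_eq_norm, ← sub_smul]
      calc ‖(b₁ - b₂) • x‖ ≤ K * ‖b₁ - b₂‖ * ‖x‖ := hmod _ _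
        _ = (K * ‖x‖) * ‖b₁ - b₂‖ := by ring
        _ = (Real.toNNReal (K * ‖x‖) : ℝ) * ‖b₁ - b₂‖ := by
            rw [Real.coe_toNNReal _ (by positivity)]
    exact h.continuous
  have hclosed : IsClosed {b : B | b • x = 0} :=
    isClosed_eq hcont continuous_const
  -- it suffices to prove it for `a` whose transform vanishes on a neighborhood of `E`
  suffices hS : {a : B | ∃ U : Set (characterSpace ℂ B),
      IsOpen U ∧ E ⊆ U ∧ ∀ φ ∈ U, φ a = 0} ⊆ {b : B | b • x = 0} from
    closure_minimal hS hclosed hf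
  rintro a ⟨U, hUopen, hEU, haU⟩
  -- the annihilator ideal of `x`
  let I : Ideal B :=
    { carrier := {b : B | b • x = 0}
      add_mem' := fun {p q} hp hq => by
        simp only [Set.mem_setOf_eq] at *
        rw [add_smul, hp, hq, add_zero]
      zero_mem' := by simp only [Set.mem_setOf_eq, zero_smul]
      smul_mem' := fun c {p} hp => by
        simp only [Set.mem_setOf_eq, smul_eq_mul] at *
        rw [mul_smul, hp, smul_zero] }
  -- the ideal of elements vanishing on a neighborhood of `Uᶜ`
  let J : Ideal B :=
    { carrier := {b : B | ∃ W : Set (characterSpace ℂ B),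
        IsOpen W ∧ Uᶜ ⊆ W ∧ ∀ φ ∈ W, φ b = 0}
      add_mem' := by
        rintro p q ⟨W1, hW1o, hW1s, hW1⟩ ⟨W2, hW2o, hW2s, hW2⟩
        exact ⟨W1 ∩ W2, hW1o.inter hW2o, Set.subset_inter hW1s hW2s, fun φ hφ => by
          rw [map_add, hW1 φ hφ.1, hW2 φ hφ.2, add_zero]⟩
      zero_mem' := ⟨Set.univ, isOpen_univ, Set.subset_univ _, fun φ _ => map_zero φ⟩
      smul_mem' := by
        rintro c p ⟨W, hWo, hWs, hW⟩
        exact ⟨W, hWo, hWs, fun φ hφ => by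
          rw [smul_eq_mul, map_mul, hW φ hφ, mul_zero]⟩ }
  -- key step : `I ⊔ J = ⊤`
  have hsup : I ⊔ J = ⊤ := by
    by_contra h
    obtain ⟨m, hmmax, hle⟩ := Ideal.exists_le_maximal _ h
    haveI := hmmax
    set φ := m.toCharacterSpace with hφdef
    have hφI : ∀ b : B, b • x = 0 → φ b = 0 := fun b hb =>
      m.toCharacterSpace_apply_eq_zero_of_mem (hle (Submodule.mem_sup_left (show b ∈ I from hb)))
    have hφU : φ ∈ U := hEU (hsupp hφI)
    obtain ⟨V, hVo, hφV, hVU⟩ :=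
      normal_exists_closure_subset (isClosed_singleton (x := φ)) hUopen
        (Set.singleton_subset_iff.mpr hφU)
    have hφmemV : φ ∈ V := hφV rfl
    obtain ⟨a', ha'1, ha'0⟩ := hreg Vᶜ hVo.isClosed_compl φ (fun hc => hc hφmemV)
    have ha'J : a' ∈ J :=
      ⟨(closure V)ᶜ, isClosed_closure.isOpen_compl,
        Set.compl_subset_compl.mpr hVU,
        fun ψ hψ => ha'0 ψ (fun hmem => hψ (subset_closure hmem))⟩
    have h0 : φ a' = 0 :=
      m.toCharacterSpace_apply_eq_zero_of_mem (hle (Submodule.mem_sup_right ha'J))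
    rw [ha'1] at h0
    exact one_ne_zero h0
  -- write `1 = u + w` with `u ∈ I`, `w ∈ J`
  have h1 : (1 : B) ∈ I ⊔ J := hsup ▸ Submodule.mem_top
  obtain ⟨u, hu, w, hw, huw⟩ := Submodule.mem_sup.mp h1
  obtain ⟨W, hWo, hWs, hWz⟩ := hw
  -- `a * w` has vanishing Gelfand transform, hence is zero by semisimplicity
  have haw : a * w = 0 := by
    apply hsemi
    intro ψ
    rw [map_mul]
    by_cases hψ : ψ ∈ U
    · rw [haU ψ hψ, zero_mul]
    · rw [hWz ψ (hWs hψ), mul_zero]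
  have hu' : u • x = 0 := hu
  show a • x = 0
  calc a • x = (a * u + a * w) • x := by rw [← mul_add, huw, mul_one]
    _ = a • (u • x) + (a * w) • x := by rw [add_smul, mul_smul]
    _ = 0 := by rw [hu', smul_zero, haw, zero_smul, add_zero]
end
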